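/- Let ρ^{AB} be a density matrix on C^{d_A} ⊗ C^{d_B} and |ψ⟩ a unit vector in C^{d_A}. Then the skew information satisfies I(ρ^{AB}, |ψ⟩⟨ψ| ⊗ 1_B) ≥ I(ρ^A, |ψ⟩⟨ψ|), where ρ^A = tr_B ρ^{AB}. -/

import Mathlib

open Matrix Finset Kronecker ComplexOrder

/-- The Wigner–Yanase skew information `I(ρ, O) = -(1/2) tr([√ρ, O]²)`. -/
noncomputable def skewInfo {n : Type*} [Fintype n] [DecidableEq n]
    (ρ : Matrix n n ℂ) (hρ : ρ.PosSemidef) (O : Matrix n n ℂ) : ℂ :=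
  -(1 / 2 : ℂ) * ((((hρ.1.eigenvectorUnitary : Matrix n n ℂ) *
      diagonal (((↑) : ℝ → ℂ) ∘ Real.sqrt ∘ hρ.1.eigenvalues) *
      (star hρ.1.eigenvectorUnitary : Matrix n n ℂ)) * O -
    O * ((hρ.1.eigenvectorUnitary : Matrix n n ℂ) *
      diagonal (((↑) : ℝ → ℂ) ∘ Real.sqrt ∘ hρ.1.eigenvalues) *
      (star hρ.1.eigenvectorUnitary : Matrix n n ℂ))) ^ 2).trace

/-- Partial trace over the second tensor factor. -/
noncomputable def trB {dA dB : ℕ} (M : Matrix (Fin dA × Fin dB) (Fin dA × Fin dB) ℂ) :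
    Matrix (Fin dA) (Fin dA) ℂ :=
  Matrix.of fun i j => ∑ u : Fin dB, M (i, u) (j, u)

/-- Partial trace over the first tensor factor. -/
noncomputable def trA {dA dB : ℕ} (M : Matrix (Fin dA × Fin dB) (Fin dA × Fin dB) ℂ) :
    Matrix (Fin dB) (Fin dB) ℂ :=
  Matrix.of fun u v => ∑ i : Fin dA, M (i, u) (i, v)

/-- The square root of a positive semidefinite matrix. -/
noncomputable def Matrix.PosSemidef.sqrt {n : Type*} [Fintype n] [DecidableEq n]
    {ρ : Matrix n n ℂ} (hρ : ρ.PosSemidef) : Matrix n n ℂ :=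
  (hρ.1.eigenvectorUnitary : Matrix n n ℂ) *
      diagonal (((↑) : ℝ → ℂ) ∘ Real.sqrt ∘ hρ.1.eigenvalues) *
      (star hρ.1.eigenvectorUnitary : Matrix n n ℂ)

lemma Matrix.PosSemidef.posSemidef_sqrt {n : Type*} [Fintype n] [DecidableEq n]
    {ρ : Matrix n n ℂ} (hρ : ρ.PosSemidef) : hρ.sqrt.PosSemidef := by
  have hd : (diagonal (((↑) : ℝ → ℂ) ∘ Real.sqrt ∘ hρ.1.eigenvalues)).PosSemidef :=
    PosSemidef.diagonal fun i => Complex.zero_le_real.mpr (Real.sqrt_nonneg _)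
  have := hd.mul_mul_conjTranspose_same (hρ.1.eigenvectorUnitary : Matrix n n ℂ)
  unfold Matrix.PosSemidef.sqrt
  rwa [Matrix.star_eq_conjTranspose]

lemma Matrix.PosSemidef.sqrt_mul_self {n : Type*} [Fintype n] [DecidableEq n]
    {ρ : Matrix n n ℂ} (hρ : ρ.PosSemidef) : hρ.sqrt * hρ.sqrt = ρ := by
  conv_rhs => rw [hρ.1.spectral_theorem, Unitary.conjStarAlgAut_apply]
  unfold Matrix.PosSemidef.sqrt
  simp only [Matrix.mul_assoc]
  rw [← Matrix.mul_assoc (star hρ.1.eigenvectorUnitary : Matrix n n ℂ)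
    (hρ.1.eigenvectorUnitary : Matrix n n ℂ), Unitary.coe_star_mul_self, Matrix.one_mul,
    ← Matrix.mul_assoc (diagonal _) (diagonal _), diagonal_mul_diagonal]
  congr 3
  funext i
  simp only [Function.comp_apply]
  rw [← Complex.ofReal_mul, Real.mul_self_sqrt (hρ.eigenvalues_nonneg i)]
  rfl

lemma skewInfo_eq_sub {n : Type*} [Fintype n] [DecidableEq n]
    (ρ : Matrix n n ℂ) (hρ : ρ.PosSemidef) (O : Matrix n n ℂ) :
    skewInfo ρ hρ O = (ρ * (O * O)).trace - (hρ.sqrt * O * (hρ.sqrt * O)).trace := by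
  show -(1 / 2 : ℂ) * ((hρ.sqrt * O - O * hρ.sqrt) ^ 2).trace = _
  set S := hρ.sqrt with hSdef
  have hSS : S * S = ρ := hρ.sqrt_mul_self
  have h1 : (S * O - O * S) ^ 2 =
      S * O * (S * O) - S * (O * O) * S - O * (S * S) * O + O * S * (O * S) := by
    noncomm_ring
  rw [h1, trace_add, trace_sub, trace_sub]
  have e1 : (S * (O * O) * S).trace = (ρ * (O * O)).trace := by
    rw [trace_mul_cycle, hSS]
  have e2 : (O * (S * S) * O).trace = (ρ * (O * O)).trace := by
    rw [trace_mul_cycle, hSS, ← mul_assoc, trace_mul_comm, ← mul_assoc]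
  have e3 : (O * S * (O * S)).trace = (S * O * (S * O)).trace := by
    rw [← mul_assoc, ← mul_assoc, trace_mul_cycle, ← mul_assoc]
  rw [e1, e2, e3]
  ring

lemma psd_trace_mul_nonneg {n : Type*} [Fintype n] [DecidableEq n]
    {W M : Matrix n n ℂ} (hW : W.PosSemidef) (hM : M.PosSemidef) :
    0 ≤ (W * M).trace := by
  obtain ⟨B, rfl⟩ : ∃ B : Matrix n n ℂ, W = Bᴴ * B :=
    ⟨hW.sqrt, by rw [hW.posSemidef_sqrt.1, hW.sqrt_mul_self]⟩
  have h1 : (Bᴴ * B * M).trace = (B * M * Bᴴ).trace := by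
    rw [Matrix.mul_assoc, trace_mul_comm, Matrix.mul_assoc]
  rw [h1]
  have h2 : (B * M * Bᴴ).PosSemidef := hM.mul_mul_conjTranspose_same B
  calc (0:ℂ) = ∑ i, (0:ℂ) := by simp
  _ ≤ ∑ i, (B * M * Bᴴ) i i := by
      apply Finset.sum_le_sum
      intro i _
      have := h2.dotProduct_mulVec_nonneg (Pi.single i 1)
      simpa [dotProduct, Matrix.mulVec, Pi.single_apply] using this
  _ = (B * M * Bᴴ).trace := rfl

lemma psd_sub_of_sq_sub_sq {n : Type*} [Fintype n] [DecidableEq n]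
    {A Y : Matrix n n ℂ} (hA : A.PosSemidef) (hY : Y.PosSemidef)
    (h : (A * A - Y * Y).PosSemidef) : (A - Y).PosSemidef := by
  have hT : (A - Y).IsHermitian := hA.1.sub hY.1
  refine hT.posSemidef_iff_eigenvalues_nonneg.mpr fun i => ?_
  by_contra hlt
  push_neg at hlt
  set t : ℝ := hT.eigenvalues i with htdef
  set v : n → ℂ := ⇑(hT.eigenvectorBasis i) with hvdef
  have hv : (A - Y) *ᵥ v = (t : ℂ) • v := by
    have h' := hT.mulVec_eigenvectorBasis i
    ext j
    have := congrFun h' j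
    simpa [Pi.smul_apply, Complex.real_smul] using this
  have hvne : v ≠ 0 := by
    have := hT.eigenvectorBasis.orthonormal.ne_zero i
    intro hc
    apply this
    ext j
    simpa [hvdef] using congrFun hc j
  have h_sum : star v ⬝ᵥ (A * A - Y * Y) *ᵥ v
      = (t : ℂ) * (star v ⬝ᵥ A *ᵥ v + star v ⬝ᵥ Y *ᵥ v) := by
    calc star v ⬝ᵥ (A * A - Y * Y) *ᵥ v
        = star v ⬝ᵥ A *ᵥ (A - Y) *ᵥ v + star v ⬝ᵥ (A - Y) *ᵥ Y *ᵥ v := by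
          rw [mulVec_mulVec, mulVec_mulVec, ← dotProduct_add, ← add_mulVec, mul_sub, sub_mul,
            add_sub, sub_add_cancel]
      _ = (t : ℂ) * (star v ⬝ᵥ A *ᵥ v) + star v ᵥ* (A - Y)ᴴ ⬝ᵥ Y *ᵥ v := by
          rw [hv, mulVec_smul, dotProduct_smul, smul_eq_mul, dotProduct_mulVec _ (A - Y), hT]
      _ = (t : ℂ) * (star v ⬝ᵥ A *ᵥ v + star v ⬝ᵥ Y *ᵥ v) := by
          rw [← star_mulVec, hv, mul_add, star_smul, smul_dotProduct]
          simp only [smul_eq_mul, RCLike.star_def, RCLike.conj_ofReal, Complex.conj_ofReal]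
  have h0 : (0:ℂ) ≤ (t : ℂ) * (star v ⬝ᵥ A *ᵥ v + star v ⬝ᵥ Y *ᵥ v) := h_sum ▸ h.dotProduct_mulVec_nonneg v
  set α := star v ⬝ᵥ A *ᵥ v with hα
  set β := star v ⬝ᵥ Y *ᵥ v with hβ
  have hα0 : 0 ≤ α := hA.dotProduct_mulVec_nonneg v
  have hβ0 : 0 ≤ β := hY.dotProduct_mulVec_nonneg v
  have hs0 : 0 ≤ α + β := add_nonneg hα0 hβ0
  have hsum0 : α + β = 0 := by
    by_contra hne
    have hlt' : 0 < α + β := lt_of_le_of_ne hs0 (Ne.symm hne)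
    have : (t : ℂ) * (α + β) < 0 := by
      apply mul_neg_of_neg_of_pos _ hlt'
      exact_mod_cast hlt
    exact this.not_ge h0
  have hαz : α = 0 := le_antisymm (by
    have : α ≤ α + β := le_add_of_nonneg_right hβ0
    rwa [hsum0] at this) hα0
  have hβz : β = 0 := by
    have := hsum0
    rw [hαz, zero_add] at this
    exact this
  have hAv : A *ᵥ v = 0 := (hA.dotProduct_mulVec_zero_iff v).mp hαz
  have hYv : Y *ᵥ v = 0 := (hY.dotProduct_mulVec_zero_iff v).mp hβz
  have : (t : ℂ) • v = 0 := by
    rw [← hv, sub_mulVec, hAv, hYv, sub_zero]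
  rcases smul_eq_zero.mp this with ht0 | hv0
  · exact absurd (by exact_mod_cast ht0 : t = 0) (ne_of_lt hlt)
  · exact hvne hv0

lemma trace_trB {dA dB : ℕ} (M : Matrix (Fin dA × Fin dB) (Fin dA × Fin dB) ℂ) :
    (trB M).trace = M.trace := by
  simp [trB, Matrix.trace, Matrix.diag, Fintype.sum_prod_type]

lemma trB_mul_kron {dA dB : ℕ} (X : Matrix (Fin dA × Fin dB) (Fin dA × Fin dB) ℂ)
    (C : Matrix (Fin dA) (Fin dA) ℂ) :
    trB (X * (C ⊗ₖ (1 : Matrix (Fin dB) (Fin dB) ℂ))) = trB X * C := by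
  ext i j
  simp only [trB, Matrix.of_apply, Matrix.mul_apply, Fintype.sum_prod_type,
    Matrix.kroneckerMap_apply, Matrix.one_apply, mul_ite, mul_one, mul_zero,
    Finset.sum_ite_eq', Finset.mem_univ, if_true]
  rw [Finset.sum_comm]
  apply Finset.sum_congr rfl
  intro k _
  rw [Finset.sum_mul]

/-- The isometry `y ⊗ 1` as a matrix. -/
noncomputable def Emat {dA dB : ℕ} (y : Fin dA → ℂ) : Matrix (Fin dA × Fin dB) (Fin dB) ℂ :=
  Matrix.of fun p w => y p.1 * (if p.2 = w then 1 else 0)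

lemma compress_eq {dA dB : ℕ} (S : Matrix (Fin dA × Fin dB) (Fin dA × Fin dB) ℂ)
    (y : Fin dA → ℂ) :
    (Matrix.of fun u v : Fin dB =>
      ∑ i, ∑ j, star (y i) * S (i, u) (j, v) * y j) = (Emat (dB := dB) y)ᴴ * S * Emat (dB := dB) y := by
  ext u v
  simp only [Matrix.of_apply, Matrix.mul_apply, Matrix.conjTranspose_apply, Emat,
    Fintype.sum_prod_type, star_mul', star_one, star_zero, apply_ite (star : ℂ → ℂ),
    mul_ite, mul_one, mul_zero, ite_mul, zero_mul,
    Finset.sum_ite_eq', Finset.sum_ite_eq, Finset.mem_univ, if_true]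
  rw [Finset.sum_comm]
  apply Finset.sum_congr rfl
  intro j _
  rw [Finset.sum_mul]

lemma compress_posSemidef {dA dB : ℕ} {S : Matrix (Fin dA × Fin dB) (Fin dA × Fin dB) ℂ}
    (hS : S.PosSemidef) (y : Fin dA → ℂ) :
    (Matrix.of fun u v : Fin dB =>
      ∑ i, ∑ j, star (y i) * S (i, u) (j, v) * y j).PosSemidef := by
  rw [compress_eq]
  exact hS.conjTranspose_mul_mul_same (Emat y)

lemma kron_eq_Emat {dA dB : ℕ} (y : Fin dA → ℂ) :
    (vecMulVec y (star y)) ⊗ₖ (1 : Matrix (Fin dB) (Fin dB) ℂ) = Emat (dB := dB) y * (Emat (dB := dB) y)ᴴ := by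
  ext p q
  simp only [Matrix.kroneckerMap_apply, Matrix.vecMulVec_apply, Matrix.one_apply,
    Matrix.mul_apply, Matrix.conjTranspose_apply, Emat, Matrix.of_apply, star_mul',
    star_one, star_zero, apply_ite (star : ℂ → ℂ), mul_ite, mul_one, mul_zero, ite_mul, zero_mul,
    Finset.sum_ite_eq', Finset.sum_ite_eq, Finset.mem_univ, if_true, Pi.star_apply]



lemma sum_rot3 {ι μ κ : Type*} [Fintype ι] [Fintype μ] [Fintype κ] (f : ι → μ → κ → ℂ) :
    ∑ a, ∑ b, ∑ c, f a b c = ∑ c, ∑ a, ∑ b, f a b c := by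
  calc ∑ a, ∑ b, ∑ c, f a b c = ∑ a, ∑ c, ∑ b, f a b c := by
        apply Finset.sum_congr rfl; intros; exact Finset.sum_comm
    _ = ∑ c, ∑ a, ∑ b, f a b c := Finset.sum_comm

lemma sum_rev3 {ι μ κ : Type*} [Fintype ι] [Fintype μ] [Fintype κ] (f : ι → μ → κ → ℂ) :
    ∑ a, ∑ b, ∑ c, f a b c = ∑ c, ∑ b, ∑ a, f a b c := by
  calc ∑ a, ∑ b, ∑ c, f a b c = ∑ c, ∑ a, ∑ b, f a b c := sum_rot3 f
    _ = ∑ c, ∑ b, ∑ a, f a b c := by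
        apply Finset.sum_congr rfl; intros; exact Finset.sum_comm

lemma sum_swap4 {ι κ : Type*} [Fintype ι] [Fintype κ] (f : ι → ι → κ → κ → ℂ) :
    ∑ i, ∑ j, ∑ u, ∑ v, f i j u v = ∑ u, ∑ v, ∑ i, ∑ j, f i j u v := by
  calc ∑ i, ∑ j, ∑ u, ∑ v, f i j u v
      = ∑ i, ∑ u, ∑ j, ∑ v, f i j u v := by
        apply Finset.sum_congr rfl; intro i _; exact Finset.sum_comm
    _ = ∑ u, ∑ i, ∑ j, ∑ v, f i j u v := Finset.sum_comm
    _ = ∑ u, ∑ i, ∑ v, ∑ j, f i j u v := by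
        apply Finset.sum_congr rfl; intro u _
        apply Finset.sum_congr rfl; intro i _
        exact Finset.sum_comm
    _ = ∑ u, ∑ v, ∑ i, ∑ j, f i j u v := by
        apply Finset.sum_congr rfl; intro u _; exact Finset.sum_comm

set_option maxHeartbeats 2000000 in
theorem skewInfo_global_ge_local (dA dB : ℕ)
    (ρAB : Matrix (Fin dA × Fin dB) (Fin dA × Fin dB) ℂ)
    (hρAB : ρAB.PosSemidef) (htr : ρAB.trace = 1)
    (hρA : (trB ρAB).PosSemidef)
    (ψ : Fin dA → ℂ) (hψ : star ψ ⬝ᵥ ψ = 1) :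
    skewInfo (trB ρAB) hρA (vecMulVec ψ (star ψ))
      ≤ skewInfo ρAB hρAB
          ((vecMulVec ψ (star ψ)) ⊗ₖ (1 : Matrix (Fin dB) (Fin dB) ℂ)) := by
  classical
  have hS := hρAB.posSemidef_sqrt
  have hA := hρA.posSemidef_sqrt
  set S : Matrix (Fin dA × Fin dB) (Fin dA × Fin dB) ℂ := hρAB.sqrt with hSdef
  set A : Matrix (Fin dA) (Fin dA) ℂ := hρA.sqrt with hAdef
  have hSherm : Sᴴ = S := hS.1
  have hAherm : Aᴴ = A := hA.1
  have hSS : S * S = ρAB := hρAB.sqrt_mul_self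
  have hAA : A * A = trB ρAB := hρA.sqrt_mul_self
  set P : Matrix (Fin dA) (Fin dA) ℂ := vecMulVec ψ (star ψ) with hPdef
  set V : Matrix (Fin dA × Fin dB) (Fin dB) ℂ := Emat ψ with hVdef
  -- projector properties
  have hψ' : ∑ k, star (ψ k) * ψ k = 1 := hψ
  have hPP : P * P = P := by
    ext i j
    simp only [Matrix.mul_apply, vecMulVec_apply, Pi.star_apply, hPdef]
    calc ∑ k, ψ i * star (ψ k) * (ψ k * star (ψ j))
        = (ψ i * star (ψ j)) * ∑ k, star (ψ k) * ψ k := by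
          rw [Finset.mul_sum]
          apply Finset.sum_congr rfl
          intro k _
          ring
      _ = ψ i * star (ψ j) := by rw [hψ', mul_one]
  have hQV : P ⊗ₖ (1 : Matrix (Fin dB) (Fin dB) ℂ) = V * Vᴴ := kron_eq_Emat ψ
  have hVV : Vᴴ * V = 1 := by
    ext w w'
    simp only [Matrix.mul_apply, Matrix.conjTranspose_apply, hVdef, Emat, Matrix.of_apply,
      Fintype.sum_prod_type, star_mul', star_one, star_zero, apply_ite (star : ℂ → ℂ),
      mul_ite, ite_mul, mul_one, mul_zero, zero_mul, Finset.sum_ite_eq', Finset.sum_ite_eq,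
      Finset.mem_univ, if_true, Matrix.one_apply]
    by_cases h : w = w'
    · subst h
      simpa using hψ'
    · simp [h, Ne.symm h]
  have hQQ : (P ⊗ₖ (1 : Matrix (Fin dB) (Fin dB) ℂ)) * (P ⊗ₖ (1 : Matrix (Fin dB) (Fin dB) ℂ))
      = P ⊗ₖ (1 : Matrix (Fin dB) (Fin dB) ℂ) := by
    rw [← mul_kronecker_mul, hPP, Matrix.one_mul]
  -- the compressed matrix
  set M : Matrix (Fin dB) (Fin dB) ℂ :=
    Matrix.of (fun u v => ∑ i, ∑ j, star (ψ i) * S (i, u) (j, v) * ψ j) with hMdef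
  have hMpsd : M.PosSemidef := compress_posSemidef hS ψ
  have hMherm : Mᴴ = M := hMpsd.1
  have hMstar : ∀ u v, star (M u v) = M v u := by
    intro u v
    conv_rhs => rw [← hMherm]
    rfl
  -- rewrite skew informations
  rw [skewInfo_eq_sub, skewInfo_eq_sub]
  rw [hQQ, hPP]
  rw [← hSdef, ← hAdef]
  -- trace identities
  have E1 : (ρAB * (P ⊗ₖ (1 : Matrix (Fin dB) (Fin dB) ℂ))).trace = (trB ρAB * P).trace := by
    rw [← trace_trB (ρAB * _), trB_mul_kron]
  set q : ℂ := star ψ ⬝ᵥ A *ᵥ ψ with hqdef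
  have E2 : (A * P * (A * P)).trace = q * q := by
    have key : A * P = vecMulVec (A *ᵥ ψ) (star ψ) := by
      ext i j
      simp [Matrix.mul_apply, vecMulVec_apply, Matrix.mulVec, dotProduct,
        Finset.sum_mul, mul_assoc, hPdef]
    rw [key]
    have hq' : q = ∑ i, star ψ i * (A *ᵥ ψ) i := by
      rw [hqdef]; rfl
    simp only [Matrix.trace, Matrix.diag_apply, Matrix.mul_apply, vecMulVec_apply]
    calc ∑ i, ∑ j, (A *ᵥ ψ) i * star ψ j * ((A *ᵥ ψ) j * star ψ i)
        = ∑ i, (star ψ i * (A *ᵥ ψ) i) * ∑ j, star ψ j * (A *ᵥ ψ) j := by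
          apply Finset.sum_congr rfl
          intro i _
          rw [Finset.mul_sum]
          apply Finset.sum_congr rfl
          intro j _
          ring
      _ = q * q := by rw [hq', Finset.sum_mul]
  have E3 : (S * (P ⊗ₖ (1 : Matrix (Fin dB) (Fin dB) ℂ))
      * (S * (P ⊗ₖ (1 : Matrix (Fin dB) (Fin dB) ℂ)))).trace = (M * M).trace := by
    rw [hQV]
    have hMV : M = Vᴴ * S * V := by rw [hMdef, hVdef]; exact compress_eq S ψ
    calc (S * (V * Vᴴ) * (S * (V * Vᴴ))).trace
        = ((S * V * Vᴴ * (S * V)) * Vᴴ).trace := by simp only [Matrix.mul_assoc]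
      _ = (Vᴴ * (S * V * Vᴴ * (S * V))).trace := trace_mul_comm _ _
      _ = ((Vᴴ * S * V) * (Vᴴ * S * V)).trace := by simp only [Matrix.mul_assoc]
      _ = (M * M).trace := by rw [hMV]
  rw [E1, E2, E3]
  -- main inequality : (M*M).trace ≤ q * q
  have main : (M * M).trace ≤ q * q := by
    -- the real quantities
    set r : ℝ := ∑ u, ∑ v, Complex.normSq (M u v) with hrdef
    have hr0 : 0 ≤ r :=
      Finset.sum_nonneg fun u _ => Finset.sum_nonneg fun v _ => Complex.normSq_nonneg _
    have htrMM : (M * M).trace = (r : ℂ) := by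
      rw [hrdef]
      push_cast
      simp only [Matrix.trace, Matrix.diag_apply, Matrix.mul_apply]
      apply Finset.sum_congr rfl; intro u _
      apply Finset.sum_congr rfl; intro v _
      rw [← hMstar u v, RCLike.star_def, Complex.mul_conj]
    have hq0 : (0:ℂ) ≤ q := hA.dotProduct_mulVec_nonneg ψ
    have hqim : q.im = 0 := ((Complex.le_def.mp hq0).2).symm
    have hqre0 : 0 ≤ q.re := by simpa using (Complex.le_def.mp hq0).1
    set qr : ℝ := q.re with hqrdef
    have hqeq : q = (qr : ℂ) := by
      apply Complex.ext <;> simp [hqim, hqrdef]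
    -- the auxiliary matrix Y
    set Y : Matrix (Fin dA) (Fin dA) ℂ :=
      Matrix.of (fun i j => ∑ u, ∑ v, S (i, u) (j, v) * M v u) with hYdef
    have hSstar : ∀ p q', star (S p q') = S q' p := by
      intro p q'
      conv_rhs => rw [← hSherm]
      rfl
    have hYherm : Yᴴ = Y := by
      ext i j
      show star (Y j i) = Y i j
      calc star (Y j i) = ∑ u, ∑ v, S (i,v) (j,u) * M u v := by
            simp only [hYdef, Matrix.of_apply, star_sum, star_mul', hSstar, hMstar]
        _ = Y i j := by rw [hYdef]; exact Finset.sum_comm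
    have hquad : ∀ x : Fin dA → ℂ, star x ⬝ᵥ Y *ᵥ x
        = ((Matrix.of fun u v : Fin dB =>
            ∑ i, ∑ j, star (x i) * S (i, u) (j, v) * x j) * M).trace := by
      intro x
      simp only [dotProduct, Matrix.mulVec, Matrix.trace, Matrix.diag_apply,
        Matrix.mul_apply, Matrix.of_apply, hYdef, Pi.star_apply,
        Finset.mul_sum, Finset.sum_mul]
      rw [sum_swap4 (fun i j u v => star (x i) * (S (i,u) (j,v) * M v u * x j))]
      apply Finset.sum_congr rfl; intro u _
      apply Finset.sum_congr rfl; intro v _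
      apply Finset.sum_congr rfl; intro i _
      apply Finset.sum_congr rfl; intro j _
      ring
    have hYpsd : Y.PosSemidef := by
      refine Matrix.PosSemidef.of_dotProduct_mulVec_nonneg hYherm fun x => ?_
      rw [hquad x]
      exact psd_trace_mul_nonneg (compress_posSemidef hS x) hMpsd
    have hYψ : star ψ ⬝ᵥ Y *ᵥ ψ = (M * M).trace := by
      rw [hquad ψ, ← hMdef]
    -- the core Cauchy-Schwarz estimate
    have hcore : ∀ x : Fin dA → ℂ,
        star x ⬝ᵥ ((Y * Y) *ᵥ x) ≤ (r:ℂ) * (star x ⬝ᵥ (trB ρAB *ᵥ x)) := by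
      intro x
      set z : Fin dA → ℂ := Y *ᵥ x with hz
      set w : Fin dB → (Fin dA × Fin dB) → ℂ :=
        fun v => S *ᵥ (fun p => x p.1 * (if p.2 = v then 1 else 0)) with hw
      have hL : star x ⬝ᵥ (Y * Y) *ᵥ x = star z ⬝ᵥ z := by
        have h1 : star z = star x ᵥ* Y := by rw [hz, star_mulVec, hYherm]
        rw [← Matrix.mulVec_mulVec, Matrix.dotProduct_mulVec, ← h1]
      have hLreal : star z ⬝ᵥ z = ((∑ i, Complex.normSq (z i) : ℝ) : ℂ) := by
        push_cast
        simp only [dotProduct, Pi.star_apply]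
        apply Finset.sum_congr rfl; intro i _
        rw [RCLike.star_def, mul_comm (((starRingEnd ℂ)) (z i)) (z i), Complex.mul_conj]
      have hxv : ∀ v : Fin dB,
          star (fun p : Fin dA × Fin dB => x p.1 * (if p.2 = v then 1 else 0)) ⬝ᵥ
            (ρAB *ᵥ (fun p => x p.1 * (if p.2 = v then 1 else 0)))
          = ∑ i, ∑ j, star (x i) * (ρAB (i, v) (j, v) * x j) := by
        intro v
        simp only [dotProduct, Matrix.mulVec, Pi.star_apply, Fintype.sum_prod_type,
          star_mul', star_one, star_zero, apply_ite (star : ℂ → ℂ), mul_ite, ite_mul,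
          one_mul, zero_mul, mul_zero, mul_one, Finset.sum_ite_eq', Finset.sum_ite_eq,
          Finset.mem_univ, if_true, Finset.mul_sum, Finset.sum_mul]
        apply Finset.sum_congr rfl; intro i0 _
        rw [Finset.sum_comm]
        simp only [Finset.sum_ite_eq', Finset.mem_univ, if_true]
      have hR1 : star x ⬝ᵥ (trB ρAB *ᵥ x)
          = ∑ v, star (fun p : Fin dA × Fin dB => x p.1 * (if p.2 = v then 1 else 0)) ⬝ᵥ
              (ρAB *ᵥ (fun p => x p.1 * (if p.2 = v then 1 else 0))) := by
        calc star x ⬝ᵥ (trB ρAB *ᵥ x)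
            = ∑ i, ∑ j, ∑ v, star (x i) * (ρAB (i, v) (j, v) * x j) := by
              simp only [dotProduct, Matrix.mulVec, trB, Matrix.of_apply,
                Pi.star_apply, Finset.mul_sum, Finset.sum_mul]
          _ = ∑ v, ∑ i, ∑ j, star (x i) * (ρAB (i, v) (j, v) * x j) :=
              sum_rot3 (fun i j v => star (x i) * (ρAB (i, v) (j, v) * x j))
          _ = _ := by
              apply Finset.sum_congr rfl; intro v _
              exact (hxv v).symm
      have hR2 : ∀ v, star (fun p : Fin dA × Fin dB => x p.1 * (if p.2 = v then 1 else 0)) ⬝ᵥ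
              (ρAB *ᵥ (fun p => x p.1 * (if p.2 = v then 1 else 0)))
          = ((∑ p, Complex.normSq (w v p) : ℝ) : ℂ) := by
        intro v
        have h1 : star (w v) = star (fun p : Fin dA × Fin dB =>
            x p.1 * (if p.2 = v then 1 else 0)) ᵥ* S := by
          rw [hw, star_mulVec, hSherm]
        calc star (fun p : Fin dA × Fin dB => x p.1 * (if p.2 = v then 1 else 0)) ⬝ᵥ
              (ρAB *ᵥ (fun p => x p.1 * (if p.2 = v then 1 else 0)))
            = star (w v) ⬝ᵥ (w v) := by
              rw [← hSS, ← Matrix.mulVec_mulVec, Matrix.dotProduct_mulVec, ← h1]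
          _ = ((∑ p, Complex.normSq (w v p) : ℝ) : ℂ) := by
              push_cast
              simp only [dotProduct, Pi.star_apply]
              apply Finset.sum_congr rfl; intro p _
              rw [RCLike.star_def, mul_comm (((starRingEnd ℂ)) (w v p)) (w v p), Complex.mul_conj]
      have hR : star x ⬝ᵥ (trB ρAB *ᵥ x)
          = ((∑ v, ∑ p, Complex.normSq (w v p) : ℝ) : ℂ) := by
        rw [hR1]
        push_cast
        apply Finset.sum_congr rfl
        intro v _
        rw [hR2 v]
        push_cast
        rfl
      have hzform : ∀ i, z i = ∑ p : Fin dB × Fin dB, M p.1 p.2 * w p.1 (i, p.2) := by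
        intro i
        calc z i = ∑ j, ∑ u, ∑ v, S (i, u) (j, v) * M v u * x j := by
              simp only [hz, hw, Matrix.mulVec, dotProduct, hYdef, Matrix.of_apply,
                Finset.mul_sum, Finset.sum_mul]
          _ = ∑ v, ∑ u, ∑ j, S (i, u) (j, v) * M v u * x j :=
              sum_rev3 (fun j u v => S (i, u) (j, v) * M v u * x j)
          _ = ∑ p : Fin dB × Fin dB, M p.1 p.2 * w p.1 (i, p.2) := by
              rw [Fintype.sum_prod_type]
              apply Finset.sum_congr rfl; intro v _
              apply Finset.sum_congr rfl; intro u _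
              have hwv : w v (i, u) = ∑ j, S (i, u) (j, v) * x j := by
                simp only [hw, Matrix.mulVec, dotProduct, Fintype.sum_prod_type,
                  mul_ite, ite_mul, mul_one, mul_zero, zero_mul, one_mul,
                  Finset.sum_ite_eq', Finset.sum_ite_eq, Finset.mem_univ, if_true]
              rw [hwv, Finset.mul_sum]
              apply Finset.sum_congr rfl; intro j _
              dsimp only
              ring
      have key : ∑ i, Complex.normSq (z i) ≤ r * ∑ v, ∑ p, Complex.normSq (w v p) := by
        have per : ∀ i, Complex.normSq (z i)
            ≤ r * ∑ p : Fin dB × Fin dB, Complex.normSq (w p.1 (i, p.2)) := by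
          intro i
          rw [← Complex.sq_norm]
          have h1 : ‖z i‖
              ≤ ∑ p : Fin dB × Fin dB, ‖M p.1 p.2‖ * ‖w p.1 (i, p.2)‖ := by
            rw [hzform i]
            refine (norm_sum_le _ _).trans (le_of_eq ?_)
            apply Finset.sum_congr rfl; intros; rw [norm_mul]
          have h2 : ‖z i‖ ^ 2
              ≤ (∑ p : Fin dB × Fin dB,
                  ‖M p.1 p.2‖ * ‖w p.1 (i, p.2)‖) ^ 2 :=
            pow_le_pow_left₀ (norm_nonneg _) h1 2
          refine h2.trans ?_
          refine (Finset.sum_mul_sq_le_sq_mul_sq Finset.univ _ _).trans (le_of_eq ?_)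
          congr 1
          · rw [hrdef, Fintype.sum_prod_type]
            apply Finset.sum_congr rfl; intros
            apply Finset.sum_congr rfl; intros
            rw [Complex.sq_norm]
          · apply Finset.sum_congr rfl; intros; rw [Complex.sq_norm]
        calc ∑ i, Complex.normSq (z i)
            ≤ ∑ i, r * ∑ p : Fin dB × Fin dB, Complex.normSq (w p.1 (i, p.2)) :=
              Finset.sum_le_sum fun i _ => per i
          _ = r * ∑ v, ∑ p, Complex.normSq (w v p) := by
              rw [← Finset.mul_sum]
              congr 1
              calc ∑ i, ∑ p : Fin dB × Fin dB, Complex.normSq (w p.1 (i, p.2))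
                  = ∑ i, ∑ v, ∑ u, Complex.normSq (w v (i, u)) := by
                    apply Finset.sum_congr rfl; intros
                    rw [Fintype.sum_prod_type]
                _ = ∑ v, ∑ i, ∑ u, Complex.normSq (w v (i, u)) := Finset.sum_comm
                _ = ∑ v, ∑ p, Complex.normSq (w v p) := by
                    apply Finset.sum_congr rfl; intros
                    rw [Fintype.sum_prod_type]
      rw [hL, hLreal, hR, ← Complex.ofReal_mul, Complex.real_le_real]
      exact key
    -- assemble via operator monotonicity of the square root
    set m : ℝ := Real.sqrt r with hmdef
    have hm0 : 0 ≤ m := Real.sqrt_nonneg r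
    have hmm : m * m = r := Real.mul_self_sqrt hr0
    have hA'psd : (((m:ℝ):ℂ) • A).PosSemidef := by
      refine Matrix.PosSemidef.of_dotProduct_mulVec_nonneg ?_ ?_
      · show (((m:ℝ):ℂ) • A)ᴴ = ((m:ℝ):ℂ) • A
        rw [Matrix.conjTranspose_smul, hAherm, RCLike.star_def, Complex.conj_ofReal]
      · intro x
        rw [Matrix.smul_mulVec, dotProduct_smul, smul_eq_mul]
        exact mul_nonneg (by exact_mod_cast hm0) (hA.dotProduct_mulVec_nonneg x)
    have hsq : (((m:ℝ):ℂ) • A) * (((m:ℝ):ℂ) • A) - Y * Y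
        = ((r:ℝ):ℂ) • (trB ρAB) - Y * Y := by
      rw [Matrix.smul_mul, Matrix.mul_smul, smul_smul, hAA, ← Complex.ofReal_mul, hmm]
    have hdiffpsd : ((((m:ℝ):ℂ) • A) * (((m:ℝ):ℂ) • A) - Y * Y).PosSemidef := by
      rw [hsq]
      refine Matrix.PosSemidef.of_dotProduct_mulVec_nonneg ?_ ?_
      · show _ᴴ = _
        rw [Matrix.conjTranspose_sub, Matrix.conjTranspose_smul, Matrix.conjTranspose_mul,
          hYherm, hρA.1, RCLike.star_def, Complex.conj_ofReal]
      · intro x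
        rw [Matrix.sub_mulVec, dotProduct_sub, sub_nonneg, Matrix.smul_mulVec,
          dotProduct_smul, smul_eq_mul]
        exact hcore x
    have hfin := (psd_sub_of_sq_sub_sq hA'psd hYpsd hdiffpsd).dotProduct_mulVec_nonneg ψ
    rw [Matrix.sub_mulVec, dotProduct_sub, sub_nonneg, Matrix.smul_mulVec,
      dotProduct_smul, smul_eq_mul, hYψ, htrMM, ← hqdef, hqeq,
      ← Complex.ofReal_mul, Complex.real_le_real] at hfin
    -- hfin : r ≤ m * qr
    rw [htrMM, hqeq, ← Complex.ofReal_mul, Complex.real_le_real]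
    nlinarith [sq_nonneg (qr - m)]

  exact sub_le_sub_left main _
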